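/- arXiv:1611.01124 — 4 statements merged into one kernel-verified Lean document; each statement's English description precedes it below -/
import Mathlib

section
/- Let L be a linear endomorphism of a finite-dimensional complex vector space and suppose there exist constants C > 0 and D ≥ 0 such that |Tr(Lⁿ)| ≤ C·Dⁿ for all positive integers n. Then every eigenvalue λ of L satisfies |λ| ≤ D. -/
open LinearMap Module Set

lemma traceAux {W : Type*} [AddCommGroup W] [Module ℂ W] [FiniteDimensional ℂ W]
    (R : Module.End ℂ W) (μ : ℂ) (hn : IsNilpotent (R - algebraMap ℂ (Module.End ℂ W) μ)) :
    ∀ n : ℕ, trace ℂ W (R ^ n) = μ ^ n * (finrank ℂ W : ℂ) := by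
  intro n
  induction n with
  | zero => simp [trace_one]
  | succ k ih =>
      have : R ^ (k+1) = (R ^ k) ∘ₗ R := by rw [pow_succ, Module.End.mul_eq_comp]
      rw [this, trace_comp_eq_mul_of_commute_of_isNilpotent μ (Commute.pow_left rfl k) hn, ih]
      ring

lemma tracePowEq {V : Type*} [AddCommGroup V] [Module ℂ V] [FiniteDimensional ℂ V]
    (L : Module.End ℂ V)
    (hfin : {μ : ℂ | L.maxGenEigenspace μ ≠ ⊥}.Finite) (n : ℕ) :
    trace ℂ V (L ^ n)
      = ∑ μ ∈ hfin.toFinset, μ ^ n * (finrank ℂ (L.maxGenEigenspace μ) : ℂ) := by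
  have hds := DirectSum.isInternal_submodule_of_iSupIndep_of_iSup_eq_top
    L.independent_maxGenEigenspace (Module.End.iSup_maxGenEigenspace_eq_top L)
  have hf : ∀ μ : ℂ, MapsTo (L ^ n) ↑(L.maxGenEigenspace μ) ↑(L.maxGenEigenspace μ) :=
    fun μ ↦ L.mapsTo_maxGenEigenspace_of_comm (Commute.pow_right rfl n) μ
  rw [trace_eq_sum_trace_restrict' hds hfin hf]
  refine Finset.sum_congr rfl fun μ hμ => ?_
  have hf1 : ∀ x ∈ L.maxGenEigenspace μ, L x ∈ L.maxGenEigenspace μ :=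
    L.mapsTo_maxGenEigenspace_of_comm rfl μ
  have hres : (L ^ n).restrict (hf μ) = (L.restrict hf1) ^ n := by
    exact (Module.End.pow_restrict n hf1).symm
  rw [hres]
  exact _root_.traceAux _ μ (L.isNilpotent_restrict_maxGenEigenspace_sub_algebraMap μ) n

noncomputable def Complex.abs : AbsoluteValue ℂ ℝ :=
  IsAbsoluteValue.toAbsoluteValue (norm : ℂ → ℝ)

lemma Complex.abs_apply (z : ℂ) : Complex.abs z = ‖z‖ := rfl

lemma Complex.norm_eq_abs (z : ℂ) : ‖z‖ = Complex.abs z := rfl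

lemma Complex.abs_ofReal (r : ℝ) : Complex.abs (r : ℂ) = |r| := by
  simp [Complex.abs_apply]

lemma Complex.abs_natCast (n : ℕ) : Complex.abs (n : ℂ) = n := by
  simp [Complex.abs_apply]

open Finset in
set_option maxHeartbeats 1000000 in

lemma keyAnalytic (S : Finset ℂ) (m : ℂ → ℕ) (hm : ∀ μ ∈ S, 1 ≤ m μ) (C D : ℝ)
    (hC : 0 < C) (hD : 0 ≤ D)
    (h : ∀ n : ℕ, 0 < n → Complex.abs (∑ μ ∈ S, (m μ : ℂ) * μ ^ n) ≤ C * D ^ n) :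
    ∀ lam ∈ S, Complex.abs lam ≤ D := by
  intro lam hlam
  by_contra hgt
  push_neg at hgt
  obtain ⟨μ0, hμ0S, hμ0max⟩ := S.exists_max_image (fun μ => Complex.abs μ) ⟨lam, hlam⟩
  set A := Complex.abs μ0 with hA
  have hDA : D < A := lt_of_lt_of_le hgt (hμ0max lam hlam)
  have hA0 : 0 < A := lt_of_le_of_lt hD hDA
  have hμ0ne : μ0 ≠ 0 := fun h0 => by simp [h0, hA] at hA0
  -- q and M
  set q : ℝ := D / A with hqdef
  have hq0 : 0 ≤ q := div_nonneg hD hA0.le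
  have hq1 : q < 1 := (div_lt_one hA0).2 hDA
  set M : ℝ := C * q / (1 - q) with hMdef
  have hM0 : 0 ≤ M := div_nonneg (mul_nonneg hC.le hq0) (by linarith)
  -- δ
  set T : Finset ℝ := insert (1:ℝ) ((S.erase μ0).image fun μ => Complex.abs (1 - μ/μ0)) with hTdef
  have hTne : T.Nonempty := ⟨1, mem_insert_self _ _⟩
  set δ : ℝ := T.min' hTne with hδdef
  have hδ1 : δ ≤ 1 := Finset.min'_le _ _ (mem_insert_self _ _)
  have hδpos : 0 < δ := by
    rw [hδdef, Finset.lt_min'_iff]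
    intro b hb
    rcases Finset.mem_insert.1 hb with rfl | hb
    · norm_num
    · obtain ⟨μ, hμ, rfl⟩ := Finset.mem_image.1 hb
      have hμne : μ ≠ μ0 := (Finset.mem_erase.1 hμ).1
      have : (1 : ℂ) - μ/μ0 ≠ 0 := by
        intro hz
        apply hμne
        have : μ/μ0 = 1 := by linear_combination -hz
        field_simp at this
        exact this
      exact AbsoluteValue.pos _ this
  have hδle : ∀ μ ∈ S.erase μ0, δ ≤ Complex.abs (1 - μ/μ0) := fun μ hμ =>
    Finset.min'_le _ _ (Finset.mem_insert_of_mem (Finset.mem_image_of_mem _ hμ))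
  -- B, ε, t
  set B : ℝ := ∑ μ ∈ S.erase μ0, (m μ : ℝ) * (4/δ) with hBdef
  have hB0 : 0 ≤ B := Finset.sum_nonneg fun μ _ =>
    mul_nonneg (Nat.cast_nonneg _) (by positivity)
  set ε : ℝ := min (min (1/2) (δ/4)) (1/(2*(M+B+1))) with hεdef
  have hε0 : 0 < ε := by
    apply lt_min (lt_min (by norm_num) (by positivity))
    positivity
  have hεhalf : ε ≤ 1/2 := le_trans (min_le_left _ _) (min_le_left _ _)
  have hεδ : ε ≤ δ/4 := le_trans (min_le_left _ _) (min_le_right _ _)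
  have hεM : ε ≤ 1/(2*(M+B+1)) := min_le_right _ _
  set t : ℝ := 1 - ε with htdef
  have ht2 : 1/2 ≤ t := by simp only [htdef]; linarith
  have ht1 : t < 1 := by simp only [htdef]; linarith
  have ht0 : 0 < t := by linarith
  -- the variable x μ
  set x : ℂ → ℂ := fun μ => (t:ℂ) * (μ/μ0) with hxdef
  have hxabs : ∀ μ ∈ S, Complex.abs (x μ) ≤ t := by
    intro μ hμ
    have : Complex.abs (x μ) = t * (Complex.abs μ / A) := by
      simp [hxdef, map_mul, map_div₀, Complex.abs_ofReal, abs_of_pos ht0, hA]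
    rw [this]
    have hle : Complex.abs μ / A ≤ 1 := (div_le_one hA0).2 (hμ0max μ hμ)
    nlinarith
  have hxlt : ∀ μ ∈ S, ‖x μ‖ < 1 := fun μ hμ =>
    lt_of_le_of_lt (by rw [Complex.norm_eq_abs]; exact hxabs μ hμ) ht1
  -- per-μ series
  set f : ℂ → ℕ → ℂ := fun μ n => (m μ : ℂ) * (x μ)^(n+1) with hfdef
  have hsummf : ∀ μ ∈ S, Summable (f μ) := by
    intro μ hμ
    have : f μ = fun n => ((m μ : ℂ) * x μ) * (x μ)^n := by
      funext n; simp only [hfdef]; ring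
    rw [this]
    exact (summable_geometric_of_norm_lt_one (hxlt μ hμ)).mul_left _
  have htsumf : ∀ μ ∈ S, ∑' n, f μ n = (m μ : ℂ) * (x μ / (1 - x μ)) := by
    intro μ hμ
    have h1 : f μ = fun n => ((m μ : ℂ) * x μ) * (x μ)^n := by
      funext n; simp only [hfdef]; ring
    rw [h1, tsum_mul_left, tsum_geometric_of_norm_lt_one (hxlt μ hμ)]
    rw [div_eq_mul_inv]; ring
  -- the coefficients c n
  set c : ℕ → ℂ := fun n => (∑ μ ∈ S, (m μ:ℂ) * μ^(n+1)) * ((t:ℂ)/μ0)^(n+1) with hcdef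
  have hc_eq : ∀ n, c n = ∑ μ ∈ S, f μ n := by
    intro n
    simp only [hcdef]
    rw [Finset.sum_mul]
    refine Finset.sum_congr rfl fun μ hμ => ?_
    simp only [hfdef, hxdef]
    rw [mul_assoc, ← mul_pow]
    ring_nf
  -- g and its two expressions
  set g : ℂ := ∑' n, c n with hgdef
  have hg_eq : g = ∑ μ ∈ S, (m μ : ℂ) * (x μ / (1 - x μ)) := by
    rw [hgdef]
    have : (fun n => c n) = fun n => ∑ μ ∈ S, f μ n := funext hc_eq
    rw [this, Summable.tsum_finsetSum hsummf]
    exact Finset.sum_congr rfl htsumf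
  -- upper bound
  have hnormc : ∀ n, ‖c n‖ ≤ C * q ^ (n+1) := by
    intro n
    have h1 : ‖c n‖ = Complex.abs (∑ μ ∈ S, (m μ:ℂ) * μ^(n+1)) * (t/A)^(n+1) := by
      rw [hcdef, Complex.norm_eq_abs, map_mul, map_pow, map_div₀, Complex.abs_ofReal,
        abs_of_pos ht0]
    rw [h1]
    have h2 := h (n+1) (Nat.succ_pos n)
    have h3 : (t/A)^(n+1) ≤ (1/A)^(n+1) := by
      gcongr <;> first | positivity | linarith
    have h4 : D^(n+1) * (1/A)^(n+1) = q^(n+1) := by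
      rw [← mul_pow]; congr 1; rw [hqdef]; ring
    calc Complex.abs (∑ μ ∈ S, (m μ:ℂ) * μ^(n+1)) * (t/A)^(n+1)
        ≤ (C * D^(n+1)) * (1/A)^(n+1) := by
          apply mul_le_mul h2 h3 (by positivity) (by positivity)
      _ = C * q^(n+1) := by rw [mul_assoc, h4]
  have hmaj : Summable (fun n : ℕ => C * q^(n+1)) := by
    have : (fun n : ℕ => C * q^(n+1)) = fun n => (C * q) * q^n := by
      funext n; ring
    rw [this]
    exact (summable_geometric_of_lt_one hq0 hq1).mul_left _
  have htsum_maj : ∑' n : ℕ, C * q^(n+1) = M := by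
    have : (fun n : ℕ => C * q^(n+1)) = fun n => (C * q) * q^n := by
      funext n; ring
    rw [this, tsum_mul_left, tsum_geometric_of_lt_one hq0 hq1, hMdef, div_eq_mul_inv]
  have hnormsum : Summable (fun n => ‖c n‖) := by
    exact Summable.of_nonneg_of_le (fun n => norm_nonneg _) hnormc hmaj
  have hcsum : Summable c := by
    rw [show c = fun n => ∑ μ ∈ S, f μ n from funext hc_eq]
    exact summable_sum fun μ hμ => hsummf μ hμ
  have hup : Complex.abs g ≤ M := by
    rw [← Complex.norm_eq_abs, hgdef]
    calc ‖∑' n, c n‖ ≤ ∑' n, ‖c n‖ := norm_tsum_le_tsum_norm hnormsum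
      _ ≤ ∑' n : ℕ, C * q^(n+1) := Summable.tsum_le_tsum hnormc hnormsum hmaj
      _ = M := htsum_maj
  -- lower bound
  have hxμ0 : x μ0 = (t:ℂ) := by
    simp [hxdef, div_self hμ0ne]
  have hsplit : g = (m μ0 : ℂ) * ((t:ℂ)/(1-(t:ℂ)))
      + ∑ μ ∈ S.erase μ0, (m μ : ℂ) * (x μ / (1 - x μ)) := by
    rw [hg_eq, ← Finset.add_sum_erase _ _ hμ0S, hxμ0]
  have ht1c : (1 : ℂ) - (t:ℂ) ≠ 0 := by
    intro hz
    have : (t:ℂ) = 1 := by linear_combination -hz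
    rw [show (1:ℂ) = ((1:ℝ):ℂ) by norm_num] at this
    exact absurd (Complex.ofReal_inj.1 this) (by linarith)
  have habsterm : Complex.abs ((m μ0 : ℂ) * ((t:ℂ)/(1-(t:ℂ)))) = (m μ0 : ℝ) * (t/(1-t)) := by
    have : (m μ0 : ℂ) * ((t:ℂ)/(1-(t:ℂ))) = (((m μ0 : ℝ) * (t/(1-t)) : ℝ) : ℂ) := by
      push_cast
      ring
    rw [this, Complex.abs_ofReal, abs_of_nonneg]
    apply mul_nonneg (Nat.cast_nonneg _)
    apply div_nonneg ht0.le (by linarith)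
  have hrest : Complex.abs (∑ μ ∈ S.erase μ0, (m μ : ℂ) * (x μ / (1 - x μ))) ≤ B := by
    rw [hBdef]
    refine le_trans (AbsoluteValue.sum_le _ _ _) (Finset.sum_le_sum fun μ hμ => ?_)
    have hμS : μ ∈ S := Finset.mem_of_mem_erase hμ
    rw [map_mul, Complex.abs_natCast]
    apply mul_le_mul_of_nonneg_left ?_ (Nat.cast_nonneg _)
    rw [map_div₀]
    have hden : δ/4 ≤ Complex.abs (1 - x μ) := by
      have hrw : (1:ℂ) - x μ = ((1:ℝ) - t : ℝ) + (t:ℂ) * (1 - μ/μ0) := by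
        simp only [hxdef]
        push_cast
        ring
      have h1 : Complex.abs ((t:ℂ) * (1 - μ/μ0)) = t * Complex.abs (1 - μ/μ0) := by
        rw [map_mul, Complex.abs_ofReal, abs_of_pos ht0]
      have h2 : t * Complex.abs (1 - μ/μ0) - Complex.abs (((1:ℝ) - t : ℝ) : ℂ)
          ≤ Complex.abs (1 - x μ) := by
        rw [hrw]
        have key := Complex.abs.add_le ((((1:ℝ) - t : ℝ) : ℂ) + (t:ℂ) * (1 - μ/μ0))
          (-((((1:ℝ) - t : ℝ) : ℂ)))
        have hx1 : (((1:ℝ) - t : ℝ) : ℂ) + (t:ℂ) * (1 - μ/μ0) + (-((((1:ℝ) - t : ℝ) : ℂ)))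
            = (t:ℂ) * (1 - μ/μ0) := by ring
        rw [hx1, Complex.abs.map_neg] at key
        rw [← h1]
        linarith
      have h3 : Complex.abs (((1:ℝ) - t : ℝ) : ℂ) = ε := by
        rw [Complex.abs_ofReal, abs_of_nonneg (by linarith)]
        rw [htdef]; ring
      have h4 : δ ≤ Complex.abs (1 - μ/μ0) := hδle μ hμ
      have h5 : t * δ ≤ t * Complex.abs (1 - μ/μ0) := by nlinarith
      rw [h3] at h2
      nlinarith
    have hnum : Complex.abs (x μ) ≤ 1 := le_trans (hxabs μ hμS) (by linarith)
    calc Complex.abs (x μ) / Complex.abs (1 - x μ) ≤ 1 / (δ/4) := by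
          apply div_le_div₀ (by norm_num) hnum (by positivity) hden
      _ = 4/δ := one_div_div _ _
  have hdown : (m μ0 : ℝ) * (t/(1-t)) - B ≤ Complex.abs g := by
    rw [hsplit]
    set r : ℂ := ∑ μ ∈ S.erase μ0, (m μ : ℂ) * (x μ / (1 - x μ)) with hrdef
    have key := Complex.abs.add_le ((m μ0 : ℂ) * ((t:ℂ)/(1-(t:ℂ))) + r) (-r)
    have hx1 : (m μ0 : ℂ) * ((t:ℂ)/(1-(t:ℂ))) + r + (-r)
        = (m μ0 : ℂ) * ((t:ℂ)/(1-(t:ℂ))) := by ring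
    rw [hx1, Complex.abs.map_neg] at key
    rw [habsterm] at key
    linarith
  -- final contradiction
  have hm0 : (1:ℝ) ≤ (m μ0 : ℝ) := by exact_mod_cast hm μ0 hμ0S
  have htfrac : M + B + 1 ≤ t/(1-t) := by
    have hpos : (0:ℝ) < 2*(M+B+1) := by positivity
    have h2ε : ε * (2*(M+B+1)) ≤ 1 := (le_div_iff₀ hpos).1 hεM
    rw [le_div_iff₀ (by linarith : (0:ℝ) < 1 - t)]
    have : (1:ℝ) - t = ε := by rw [htdef]; ring
    rw [this]
    nlinarith
  have hfrac0 : 0 ≤ t/(1-t) := div_nonneg ht0.le (by linarith)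
  have : M + 1 ≤ Complex.abs g := by
    have h1 : t/(1-t) ≤ (m μ0 : ℝ) * (t/(1-t)) := by nlinarith
    linarith
  linarith

theorem stmt_2 {V : Type*} [AddCommGroup V] [Module ℂ V] [FiniteDimensional ℂ V]
    (L : Module.End ℂ V) (C D : ℝ) (hC : 0 < C) (hD : 0 ≤ D)
    (h : ∀ n : ℕ, 0 < n → ‖(LinearMap.trace ℂ V) (L ^ n)‖ ≤ C * D ^ n) :
    ∀ lam : ℂ, Module.End.HasEigenvalue L lam → ‖lam‖ ≤ D := by
  simp only [Complex.norm_eq_abs] at h ⊢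
  intro lam hlam
  have hfin : {μ : ℂ | L.maxGenEigenspace μ ≠ ⊥}.Finite :=
    WellFoundedGT.finite_ne_bot_of_iSupIndep L.independent_maxGenEigenspace
  set S : Finset ℂ := hfin.toFinset with hSdef
  set m : ℂ → ℕ := fun μ => finrank ℂ (L.maxGenEigenspace μ) with hmdef
  have hmem : ∀ μ, μ ∈ S ↔ L.maxGenEigenspace μ ≠ ⊥ := by
    intro μ; rw [hSdef, Set.Finite.mem_toFinset]; rfl
  have hm : ∀ μ ∈ S, 1 ≤ m μ := by
    intro μ hμ
    rw [Nat.one_le_iff_ne_zero]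
    intro h0
    exact (hmem μ).1 hμ (Submodule.finrank_eq_zero.1 h0)
  have hlamS : lam ∈ S := by
    rw [hmem]
    intro hbot
    apply Module.End.hasEigenvalue_iff.1 hlam
    rw [← le_bot_iff, ← hbot]
    exact (L.genEigenspace lam).monotone le_top
  refine keyAnalytic S m hm C D hC hD ?_ lam hlamS
  intro n hn
  have := h n hn
  rw [tracePowEq L hfin n] at this
  convert this using 3 with μ
  · rw [mul_comm]
end

section
/- Let V and W be finite-dimensional complex vector spaces with a bilinear pairing B : V × W → ℂ that is nondegenerate in the first variable (B(v, ·) = 0 implies v = 0). Let F : V → V and G : W → W be linear maps and q, d real numbers with q > 1, such that B(F(v), G(w)) = q^d · B(v, w) for all v, w. Suppose all eigenvalues of G have absolute value at most M > 0. Then every eigenvalue α of F satisfies |α| ≥ q^d / M. -/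
theorem stmt_8 {V W : Type*} [AddCommGroup V] [Module ℂ V] [FiniteDimensional ℂ V]
    [AddCommGroup W] [Module ℂ W] [FiniteDimensional ℂ W]
    (B : V →ₗ[ℂ] W →ₗ[ℂ] ℂ)
    (hB : ∀ v : V, (∀ w : W, B v w = 0) → v = 0)
    (F : Module.End ℂ V) (G : Module.End ℂ W) (q d M : ℝ) (hq : 1 < q) (hM : 0 < M)
    (hcomp : ∀ v w, B (F v) (G w) = ((q ^ d : ℝ) : ℂ) * B v w)
    (hGev : ∀ μ : ℂ, Module.End.HasEigenvalue G μ → ‖μ‖ ≤ M) :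
    ∀ α : ℂ, Module.End.HasEigenvalue F α → q ^ d / M ≤ ‖α‖ := by
  intro α hα
  obtain ⟨v, hv⟩ := hα.exists_hasEigenvector
  have hv0 : v ≠ 0 := hv.2
  have hFv : F v = α • v := hv.apply_eq_smul
  have hqd : (0:ℝ) < q ^ d := Real.rpow_pos_of_pos (by linarith) d
  have hqd' : ((q ^ d : ℝ) : ℂ) ≠ 0 := by exact_mod_cast ne_of_gt hqd
  have key : ∀ w, α * B v (G w) = ((q ^ d : ℝ) : ℂ) * B v w := by
    intro w
    have := hcomp v w
    rwa [hFv, map_smul, LinearMap.smul_apply, smul_eq_mul] at this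
  have hα0 : α ≠ 0 := by
    intro h
    apply hv0
    apply hB
    intro w
    have := key w
    rw [h, zero_mul] at this
    exact (mul_eq_zero.mp this.symm).resolve_left hqd'
  set μ : ℂ := ((q ^ d : ℝ) : ℂ) / α with hμ
  have hkey2 : ∀ w, B v (G w) = μ * B v w := by
    intro w
    field_simp [hμ]
    rw [mul_comm]
    rw [hμ, mul_div_assoc', eq_div_iff hα0]; linear_combination key w
  have hGμ : Module.End.HasEigenvalue G μ := by
    rw [Module.End.hasEigenvalue_iff]
    intro hbot
    set T : Module.End ℂ W := G - μ • 1 with hT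
    have hTinj : Function.Injective T := by
      rw [← LinearMap.ker_eq_bot, eq_bot_iff]
      intro w hw
      have hw' : G w = μ • w := by
        have : T w = 0 := hw
        simp only [hT, LinearMap.sub_apply, LinearMap.smul_apply,
          Module.End.one_apply, sub_eq_zero] at this
        exact this
      have : w ∈ Module.End.eigenspace G μ := Module.End.mem_eigenspace_iff.mpr hw'
      rw [hbot] at this
      exact this
    have hTsurj : Function.Surjective T :=
      (LinearMap.injective_iff_surjective).mp hTinj
    apply hv0
    apply hB
    intro w
    obtain ⟨w', hw'⟩ := hTsurj w
    have : B v (T w') = 0 := by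
      simp only [hT, LinearMap.sub_apply, LinearMap.smul_apply, Module.End.one_apply,
        map_sub, map_smul, smul_eq_mul]
      rw [hkey2]
      ring
    rwa [hw'] at this
  have habs : ‖μ‖ ≤ M := hGev μ hGμ
  have hαpos : 0 < ‖α‖ := by
    simpa using (norm_pos_iff.mpr hα0)
  have habsμ : ‖μ‖ = q ^ d / ‖α‖ := by
    rw [hμ, norm_div]
    congr 1
    rw [Complex.norm_real, Real.norm_eq_abs, abs_of_pos hqd]
  rw [habsμ, div_le_iff₀ hαpos] at habs
  rw [div_le_iff₀ hM]
  linarith [habs]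
end

section
/- Let K be a field, V a finite-dimensional K-vector space, L an endomorphism of V, and U ⊆ V an L-invariant subspace such that L restricted to U is invertible while the characteristic polynomial of L on U is coprime to the characteristic polynomial of L on an L-invariant complement U'. Let B(t) be the characteristic polynomial of L|_{U'}. Then B(L) vanishes on U', B(L) restricts to an invertible endomorphism of U, and there exists a polynomial h with h(0) = 0 such that h(B(L)) is the projection of V onto U along U'. -/
open Polynomial

lemma aeval_restrict_coe {K V : Type*} [Field K] [AddCommGroup V] [Module K V]
    (L : Module.End K V) (U : Submodule K V) (hU : ∀ v ∈ U, L v ∈ U)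
    (p : Polynomial K) (x : U) :
    ((Polynomial.aeval (L.restrict hU) p x : U) : V) = Polynomial.aeval L p (x : V) := by
  induction p using Polynomial.induction_on' with
  | add f g hf hg => simp [hf, hg]
  | monomial n a =>
    rw [Polynomial.aeval_monomial, Polynomial.aeval_monomial]
    rw [Module.End.pow_restrict]
    simp [Module.End.mul_apply, LinearMap.restrict_apply, Module.algebraMap_end_apply]

theorem stmt_11 {K V : Type*} [Field K] [AddCommGroup V] [Module K V]
    [FiniteDimensional K V] (L : Module.End K V) (U U' : Submodule K V)
    (hcompl : IsCompl U U')
    (hU : ∀ v ∈ U, L v ∈ U) (hU' : ∀ v ∈ U', L v ∈ U')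
    (hLinv : Function.Bijective (L.restrict hU))
    (hcop : IsCoprime (LinearMap.charpoly (L.restrict hU))
      (LinearMap.charpoly (L.restrict hU')))
    (B : Polynomial K) (hB : B = LinearMap.charpoly (L.restrict hU')) :
    (∀ v ∈ U', Polynomial.aeval L B v = 0) ∧
    (∀ v ∈ U, Polynomial.aeval L B v ∈ U) ∧
    (∀ u ∈ U, Polynomial.aeval L B u = 0 → u = 0) ∧
    (∀ u ∈ U, ∃ u' ∈ U, Polynomial.aeval L B u' = u) ∧
    (∃ h : Polynomial K, Polynomial.eval 0 h = 0 ∧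
      (∀ u ∈ U, Polynomial.aeval (Polynomial.aeval L B) h u = u) ∧
      (∀ w ∈ U', Polynomial.aeval (Polynomial.aeval L B) h w = 0)) := by
  -- Part 1: B(L) vanishes on U'
  have part1 : ∀ v ∈ U', Polynomial.aeval L B v = 0 := by
    intro v hv
    rw [← aeval_restrict_coe L U' hU' B ⟨v, hv⟩, hB, LinearMap.aeval_self_charpoly]
    rfl
  -- Part 2: B(L) maps U to U
  have part2 : ∀ v ∈ U, Polynomial.aeval L B v ∈ U := by
    intro v hv
    rw [← aeval_restrict_coe L U hU B ⟨v, hv⟩]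
    exact ((Polynomial.aeval (L.restrict hU) B) ⟨v, hv⟩).2
  -- E := B(L|_U) is invertible, with inverse F = b(L|_U)
  obtain ⟨a, b, hab⟩ := hcop
  set E : Module.End K U := Polynomial.aeval (L.restrict hU) B with hE
  set F : Module.End K U := Polynomial.aeval (L.restrict hU) b with hF
  have hFE : F * E = 1 := by
    have := congrArg (Polynomial.aeval (L.restrict hU)) hab
    simp only [map_add, map_mul, map_one] at this
    rw [LinearMap.aeval_self_charpoly, mul_zero, zero_add, ← hB] at this
    exact this
  have hEF : E * F = 1 := by
    rw [hE, hF, ← map_mul, mul_comm, map_mul, ← hE, ← hF, hFE]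
  -- Part 3: injectivity on U
  have part3 : ∀ u ∈ U, Polynomial.aeval L B u = 0 → u = 0 := by
    intro u hu h0
    have : E ⟨u, hu⟩ = 0 := by
      apply Subtype.ext
      rw [hE, aeval_restrict_coe, h0]
      simp
    have h1 : (⟨u, hu⟩ : U) = 0 := by
      have := congrArg F this
      rwa [← Module.End.mul_apply, hFE, Module.End.one_apply, map_zero] at this
    exact congrArg Subtype.val h1
  -- Part 4: surjectivity on U
  have part4 : ∀ u ∈ U, ∃ u' ∈ U, Polynomial.aeval L B u' = u := by
    intro u hu
    refine ⟨((F ⟨u, hu⟩ : U) : V), (F ⟨u, hu⟩).2, ?_⟩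
    have heq : E (F ⟨u, hu⟩) = ⟨u, hu⟩ := by
      rw [← Module.End.mul_apply, hEF, Module.End.one_apply]
    have h2 := aeval_restrict_coe L U hU B (F ⟨u, hu⟩)
    rw [← h2, ← hE, heq]
  refine ⟨part1, part2, part3, part4, ?_⟩
  -- Part 5: construct h
  set M : Module.End K V := Polynomial.aeval L B with hM
  have hMrest : M.restrict part2 = E := by
    ext x
    exact (aeval_restrict_coe L U hU B x).symm
  -- E is a unit
  have hEunit : IsUnit E := ⟨⟨E, F, hEF, hFE⟩, rfl⟩
  -- minimal polynomial of E
  have hint : IsIntegral K E := ⟨E.charpoly, E.charpoly_monic, E.aeval_self_charpoly⟩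
  set m : Polynomial K := minpoly K E with hm
  have hm0 : m.eval 0 ≠ 0 := by
    intro h0
    have hXdvd : X ∣ m := by
      rw [Polynomial.X_dvd_iff, Polynomial.coeff_zero_eq_eval_zero]; exact h0
    obtain ⟨q, hq⟩ := hXdvd
    have hmne : m ≠ 0 := minpoly.ne_zero hint
    have hqne : q ≠ 0 := by rintro rfl; simp at hq; exact hmne hq
    have haq : Polynomial.aeval E q = 0 := by
      have h1 : Polynomial.aeval E m = 0 := minpoly.aeval K E
      rw [hq, map_mul, Polynomial.aeval_X] at h1
      have h2 : F * (E * Polynomial.aeval E q) = 0 := by rw [h1, mul_zero]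
      rwa [← mul_assoc, hFE, one_mul] at h2
    have hdle : m.degree ≤ q.degree := minpoly.degree_le_of_ne_zero K E hqne haq
    obtain ⟨n, hdq⟩ : ∃ n : ℕ, q.degree = n := ⟨q.natDegree, Polynomial.degree_eq_natDegree hqne⟩
    rw [hq, Polynomial.degree_mul, Polynomial.degree_X, hdq] at hdle
    have : (1 + n : ℕ) ≤ n := by exact_mod_cast hdle
    omega
  set m0 : K := m.eval 0 with hm0def
  refine ⟨Polynomial.C m0⁻¹ * (Polynomial.C m0 - m), ?_, ?_, ?_⟩
  · simp [inv_mul_cancel₀ hm0, hm0def]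
  · intro u hu
    have key : Polynomial.aeval E (Polynomial.C m0⁻¹ * (Polynomial.C m0 - m)) = 1 := by
      rw [map_mul, map_sub, minpoly.aeval, sub_zero, ← map_mul, ← Polynomial.C_mul,
        inv_mul_cancel₀ hm0, Polynomial.C_1, map_one]
    calc Polynomial.aeval M (Polynomial.C m0⁻¹ * (Polynomial.C m0 - m)) u
        = ((Polynomial.aeval (M.restrict part2) (Polynomial.C m0⁻¹ * (Polynomial.C m0 - m))
            ⟨u, hu⟩ : U) : V) := (aeval_restrict_coe M U part2 _ ⟨u, hu⟩).symm
      _ = u := by rw [hMrest, key]; rfl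
  · intro w hw
    set h : Polynomial K := Polynomial.C m0⁻¹ * (Polynomial.C m0 - m) with hh
    have hMw : M w = 0 := part1 w hw
    have hcoeff : h.coeff 0 = 0 := by
      rw [Polynomial.coeff_zero_eq_eval_zero]
      simp [hh, inv_mul_cancel₀ hm0, hm0def]
    conv_lhs => rw [← Polynomial.divX_mul_X_add h]
    rw [map_add, map_mul, Polynomial.aeval_X, hcoeff, map_zero]
    simp [LinearMap.add_apply, Module.End.mul_apply, hMw]
end

section
/- Let α be a nonzero complex number and d a positive integer, and suppose there exist a vector w in a finite-dimensional normed complex vector space, a linear functional φ, an endomorphism G with all eigenvalues of absolute value at most q^{d − i/2} (for reals q > 1 and 0 ≤ i ≤ 2d), and a constant c ≠ 0, such that q^{n d} = αⁿ · φ(Gⁿ(w)) for all n ≥ 1. If moreover |α| ≤ q^{i/2}, then |α| = q^{i/2}. -/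
open scoped ENNReal NNReal

theorem aux_eig {W : Type*} [NormedAddCommGroup W] [NormedSpace ℂ W] [FiniteDimensional ℂ W]
    (G : Module.End ℂ W) (μ : ℂ)
    (h : μ ∈ spectrum ℂ (LinearMap.toContinuousLinearMap G)) :
    Module.End.HasEigenvalue G μ := by
  rw [Module.End.hasEigenvalue_iff_mem_spectrum]
  by_contra hμ
  rw [spectrum.mem_iff, not_not] at hμ
  rw [spectrum.mem_iff] at h
  obtain ⟨u, hu⟩ := hμ
  apply h
  refine ⟨⟨algebraMap ℂ (W →L[ℂ] W) μ - LinearMap.toContinuousLinearMap G,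
    LinearMap.toContinuousLinearMap (↑u⁻¹ : Module.End ℂ W), ?_, ?_⟩, rfl⟩
  · have h1 : ((↑u : Module.End ℂ W) * ↑u⁻¹ : Module.End ℂ W) = 1 := u.mul_inv
    rw [hu] at h1
    ext x
    simpa [ContinuousLinearMap.mul_apply, Module.algebraMap_end_apply,
      Module.End.mul_apply] using LinearMap.congr_fun h1 x
  · have h1 : ((↑u⁻¹ : Module.End ℂ W) * ↑u : Module.End ℂ W) = 1 := u.inv_mul
    rw [hu] at h1
    ext x
    simpa [ContinuousLinearMap.mul_apply, Module.algebraMap_end_apply,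
      Module.End.mul_apply] using LinearMap.congr_fun h1 x

theorem stmt_17 {W : Type*} [NormedAddCommGroup W] [NormedSpace ℂ W]
    [FiniteDimensional ℂ W]
    (α : ℂ) (hα0 : α ≠ 0) (d : ℕ) (hd : 0 < d)
    (q : ℝ) (hq : 1 < q) (i : ℝ) (hi0 : 0 ≤ i) (hi2 : i ≤ 2 * d)
    (w : W) (φ : W →ₗ[ℂ] ℂ) (G : Module.End ℂ W)
    (hGev : ∀ μ : ℂ, Module.End.HasEigenvalue G μ →
      ‖μ‖ ≤ q ^ ((d : ℝ) - i / 2))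
    (c : ℂ) (hc : c ≠ 0)
    (heq : ∀ n : ℕ, 1 ≤ n → ((q : ℂ)) ^ (n * d) = α ^ n * φ ((G ^ n) w))
    (hub : ‖α‖ ≤ q ^ (i / 2)) :
    ‖α‖ = q ^ (i / 2) := by
  by_contra hne
  have hαlt : ‖α‖ < q ^ (i / 2) := lt_of_le_of_ne hub hne
  have hq0 : (0:ℝ) < q := by linarith
  have hαpos : 0 < ‖α‖ := by simpa using hα0
  set T : W →L[ℂ] W := LinearMap.toContinuousLinearMap G with hT
  set ρb : ℝ := q ^ ((d:ℝ) - i/2) with hρb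
  have hρbpos : 0 < ρb := Real.rpow_pos_of_pos hq0 _
  set R : ℝ := q ^ d / ‖α‖ with hR
  have hRρ : ρb < R := by
    have h1 : q ^ ((d:ℝ)) / q ^ (i/2) < q ^ ((d:ℝ)) / ‖α‖ :=
      div_lt_div_of_pos_left (Real.rpow_pos_of_pos hq0 _) hαpos hαlt
    rw [hρb, hR, ← Real.rpow_natCast q d, Real.rpow_sub hq0]
    exact h1
  have hspec : spectralRadius ℂ T ≤ ENNReal.ofReal ρb := by
    rw [spectralRadius]
    refine iSup₂_le fun μ hμ => ?_
    have h2 := hGev μ (aux_eig G μ hμ)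
    rw [show ((‖μ‖₊ : ℝ≥0∞)) = ENNReal.ofReal ‖μ‖ from (ENNReal.ofReal_eq_coe_nnreal (norm_nonneg _)).symm]
    exact ENNReal.ofReal_le_ofReal h2
  set r : ℝ := (ρb + R)/2 with hrdef
  have hr1 : ρb < r := by rw [hrdef]; linarith
  have hr2 : r < R := by rw [hrdef]; linarith
  have hrpos : 0 < r := by rw [hrdef]; linarith
  have htend := spectrum.pow_nnnorm_pow_one_div_tendsto_nhds_spectralRadius T
  have hlt : spectralRadius ℂ T < ENNReal.ofReal r :=
    lt_of_le_of_lt hspec ((ENNReal.ofReal_lt_ofReal_iff hrpos).mpr hr1)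
  have hev : ∀ᶠ n : ℕ in Filter.atTop,
      (‖T ^ n‖₊ : ℝ≥0∞) ^ (1/(n:ℝ)) < ENNReal.ofReal r :=
    htend.eventually_lt_const hlt
  obtain ⟨N, hN⟩ := Filter.eventually_atTop.mp hev
  -- norm bound
  have hnorm : ∀ n : ℕ, N ≤ n → 1 ≤ n → ‖T ^ n‖ ≤ r ^ n := by
    intro n hn h1n
    have hn0 : (n:ℝ) ≠ 0 := Nat.cast_ne_zero.mpr (by omega)
    have h3 := hN n hn
    rw [show ((‖T ^ n‖₊ : ℝ≥0∞)) = ENNReal.ofReal ‖T ^ n‖ from (ENNReal.ofReal_eq_coe_nnreal (norm_nonneg _)).symm,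
      ENNReal.ofReal_rpow_of_nonneg (norm_nonneg _) (by positivity)] at h3
    have h4 : ‖T ^ n‖ ^ (1/(n:ℝ)) < r :=
      (ENNReal.ofReal_lt_ofReal_iff_of_nonneg (Real.rpow_nonneg (norm_nonneg _) _)).mp h3
    have h5 : (‖T ^ n‖ ^ (1/(n:ℝ))) ^ n < r ^ n :=
      pow_lt_pow_left₀ h4 (Real.rpow_nonneg (norm_nonneg _) _) (by omega)
    have h6 : (‖T ^ n‖ ^ (1/(n:ℝ))) ^ n = ‖T ^ n‖ := by
      rw [← Real.rpow_natCast (‖T ^ n‖ ^ (1/(n:ℝ))) n, ← Real.rpow_mul (norm_nonneg _),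
        one_div, inv_mul_cancel₀ hn0, Real.rpow_one]
    rw [h6] at h5
    exact le_of_lt h5
  -- abs value identity
  have habs : ∀ n : ℕ, 1 ≤ n → ‖φ ((G ^ n) w)‖ = R ^ n := by
    intro n h1n
    have h7 := congrArg (‖·‖) (heq n h1n)
    rw [norm_mul, norm_pow, norm_pow, Complex.norm_real, Real.norm_eq_abs, abs_of_pos hq0] at h7
    rw [hR, div_pow, eq_div_iff (pow_ne_zero n hαpos.ne')]
    rw [mul_comm n d, pow_mul] at h7
    rw [h7]; ring
  -- functional bound
  set φc : W →L[ℂ] ℂ := LinearMap.toContinuousLinearMap φ with hφc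
  set C : ℝ := ‖φc‖ * ‖w‖ with hC
  have hC0 : 0 ≤ C := mul_nonneg (norm_nonneg _) (norm_nonneg _)
  have hTn : ∀ n : ℕ, (T ^ n) w = (G ^ n) w := by
    intro n
    have : ((T ^ n : W →L[ℂ] W) : W →ₗ[ℂ] W) = G ^ n := by
      rw [hT]; induction n with
      | zero => rfl
      | succ k ih => rw [pow_succ, pow_succ, ← ih]; rfl
    exact LinearMap.congr_fun this w
  have hkey : ∀ n : ℕ, N ≤ n → 1 ≤ n → R ^ n ≤ C * r ^ n := by
    intro n hn h1n
    have h8 : ‖φ ((G ^ n) w)‖ ≤ C * ‖T ^ n‖ := by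
      rw [← hTn n]
      have h9 : φ ((T ^ n) w) = φc ((T ^ n) w) := rfl
      rw [h9]
      calc ‖φc ((T ^ n) w)‖ ≤ ‖φc‖ * ‖(T ^ n) w‖ := φc.le_opNorm _
        _ ≤ ‖φc‖ * (‖T ^ n‖ * ‖w‖) :=
            mul_le_mul_of_nonneg_left ((T ^ n).le_opNorm w) (norm_nonneg _)
        _ = C * ‖T ^ n‖ := by rw [hC]; ring
    rw [habs n h1n] at h8
    calc R ^ n ≤ C * ‖T ^ n‖ := h8
      _ ≤ C * r ^ n := mul_le_mul_of_nonneg_left (hnorm n hn h1n) hC0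
  -- contradiction
  have hRr : 1 < R / r := (one_lt_div hrpos).mpr hr2
  have hgrow := tendsto_pow_atTop_atTop_of_one_lt hRr
  obtain ⟨M, hM⟩ := Filter.eventually_atTop.mp (hgrow.eventually_gt_atTop C)
  set n := max M (max N 1) with hn
  have h10 : C < (R/r) ^ n := hM n (le_max_left _ _)
  have h11 : R ^ n ≤ C * r ^ n :=
    hkey n (le_trans (le_max_left _ _) (le_max_right _ _))
      (le_trans (le_max_right _ _) (le_max_right _ _))
  have h12 : C * r ^ n < (R / r) ^ n * r ^ n :=
    mul_lt_mul_of_pos_right h10 (pow_pos hrpos n)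
  have h13 : (R / r) ^ n * r ^ n = R ^ n := by
    rw [div_pow, div_mul_cancel₀ _ (pow_pos hrpos n).ne']
  linarith
end
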